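/- arXiv:2306.07690 — 7 statements merged into one kernel-verified Lean document; each statement's English description precedes it below -/
import Mathlib

section
/- The image of an aggregation function carries a monoid structure: let δ : Multiset τ → Multiset τ be an aggregation function and define a ⊕δ b := δ(a + b). Then for all x, y, z in the range of δ: (x ⊕δ y) ⊕δ z = x ⊕δ (y ⊕δ z), x ⊕δ 0 = x = 0 ⊕δ x, and x ⊕δ y lies in the range of δ; moreover δ(a + b) = δ(a) ⊕δ δ(b) for all multisets a, b (i.e. δ is a monoid homomorphism from (Multiset τ, +, 0) onto its image with operation ⊕δ and neutral element 0). -/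
/-- The image of an aggregation function carries a monoid structure with
operation `a ⊕δ b := δ (a + b)` and neutral element `0`, and `δ` is a monoid
homomorphism from bags onto this image. -/
theorem aggregation_image_monoid {τ : Type*} (δ : Multiset τ → Multiset τ)
    (h0 : δ 0 = 0) (hagg : ∀ a b : Multiset τ, δ (a + b) = δ (δ a + δ b)) :
    (∀ x ∈ Set.range δ, ∀ y ∈ Set.range δ, ∀ z ∈ Set.range δ,
        δ (δ (x + y) + z) = δ (x + δ (y + z))) ∧
    (∀ x ∈ Set.range δ, δ (x + 0) = x ∧ x = δ (0 + x)) ∧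
    (∀ x ∈ Set.range δ, ∀ y ∈ Set.range δ, δ (x + y) ∈ Set.range δ) ∧
    (∀ a b : Multiset τ, δ (a + b) = δ (δ a + δ b)) := by
  have hid : ∀ x ∈ Set.range δ, δ x = x := by
    rintro _ ⟨a, rfl⟩
    have := hagg a 0
    simp [h0] at this
    exact this.symm
  refine ⟨?_, ?_, ?_, hagg⟩
  · rintro x hx y hy z hz
    have h1 : δ (δ (x + y) + z) = δ (x + y + z) := by
      conv_lhs => rw [← hid z hz]
      rw [← hagg]
    have h2 : δ (x + δ (y + z)) = δ (x + (y + z)) := by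
      conv_lhs => rw [← hid x hx]
      rw [← hagg]
    rw [h1, h2, add_assoc]
  · intro x hx
    constructor
    · rw [add_zero]; exact hid x hx
    · rw [zero_add]; exact (hid x hx).symm
  · intro x _ y _; exact ⟨x + y, rfl⟩
end

section
/- For a bag homomorphism φ and an aggregation function δ, the following three conditions are equivalent: (1) for all multisets a, b, δ(a) = δ(b) implies δ(φ(a)) = δ(φ(b)); (2) for all multisets a, b, δ(φ(δ(a + b))) = δ(φ(a) + φ(b)); (3) δ ∘ φ ∘ δ = δ ∘ φ. -/
/-- For a bag homomorphism `φ` and an aggregation function `δ`, the three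
compatibility conditions are equivalent. -/
theorem compatibility_conditions_equiv {τ : Type*}
    (φ δ : Multiset τ → Multiset τ)
    (hφ0 : φ 0 = 0) (hφadd : ∀ a b : Multiset τ, φ (a + b) = φ a + φ b)
    (hδ0 : δ 0 = 0) (hagg : ∀ a b : Multiset τ, δ (a + b) = δ (δ a + δ b)) :
    ((∀ a b : Multiset τ, δ a = δ b → δ (φ a) = δ (φ b)) ↔
      (∀ a b : Multiset τ, δ (φ (δ (a + b))) = δ (φ a + φ b))) ∧
    ((∀ a b : Multiset τ, δ (φ (δ (a + b))) = δ (φ a + φ b)) ↔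
      (δ ∘ φ ∘ δ = δ ∘ φ)) := by
  have hidem : ∀ a : Multiset τ, δ (δ a) = δ a := by
    intro a
    have h := hagg a 0
    simp [hδ0] at h
    exact h.symm
  have h2to3 : (∀ a b : Multiset τ, δ (φ (δ (a + b))) = δ (φ a + φ b)) →
      ∀ a : Multiset τ, δ (φ (δ a)) = δ (φ a) := by
    intro h2 a
    have := h2 a 0
    simpa [hφ0] using this
  constructor
  · constructor
    · intro h1 a b
      have : δ (δ (a + b)) = δ (a + b) := hidem _
      have := h1 _ _ this
      rw [this, hφadd]
    · intro h2 a b hab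
      have ha := h2to3 h2 a
      have hb := h2to3 h2 b
      rw [← ha, ← hb, hab]
  · constructor
    · intro h2
      funext a
      exact h2to3 h2 a
    · intro h3 a b
      have := congrFun h3 (a + b)
      simp only [Function.comp] at this
      rw [this, hφadd]
end

section
/- Duplicate elimination is compatible with every bag homomorphism: for every additive monoid homomorphism φ : Multiset τ → Multiset τ and every multiset A, dedup(φ(dedup(A))) = dedup(φ(A)), where dedup removes duplicate elements from a multiset. -/
/-- Duplicate elimination is compatible with every bag homomorphism. -/
theorem dedup_compatible_with_hom {τ : Type*} [DecidableEq τ]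
    (φ : Multiset τ → Multiset τ)
    (hφ0 : φ 0 = 0) (hφadd : ∀ a b : Multiset τ, φ (a + b) = φ a + φ b)
    (A : Multiset τ) :
    (φ A.dedup).dedup = (φ A).dedup := by
  have tf : ∀ B : Multiset τ,
      (φ B).toFinset = B.toFinset.sup (fun x => (φ {x}).toFinset) := by
    intro B
    induction B using Multiset.induction with
    | empty => simp [hφ0]
    | cons x s ih =>
      have : φ (x ::ₘ s) = φ {x} + φ s := by
        rw [← Multiset.singleton_add, hφadd]
      rw [this, Multiset.toFinset_add, ih, Multiset.toFinset_cons,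
        Finset.sup_insert, Finset.sup_eq_union]
  have h1 : (φ A.dedup).toFinset = (φ A).toFinset := by
    rw [tf, tf, Multiset.toFinset_dedup]
  calc (φ A.dedup).dedup = (φ A.dedup).toFinset.val := rfl
    _ = (φ A).toFinset.val := by rw [h1]
    _ = (φ A).dedup := rfl
end

section
/- The closed form of the fixpoint sequence satisfies the fixpoint recurrence: let φ be a bag homomorphism and δ an aggregation function compatible with φ (δ ∘ φ ∘ δ = δ ∘ φ), let R be a multiset, and for each n define S_n := δ applied to the sum over 0 ≤ k ≤ n of (δ ∘ φ)^k(δ(R)) (equivalently, the ⊕δ-combination of these terms, where a ⊕δ b := δ(a + b)). Then S_0 = δ(R) and for every n, S_{n+1} = δ(R + φ(S_n)). -/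
/-- The closed form of the fixpoint sequence satisfies the fixpoint
recurrence: with `S n = δ (∑_{k ≤ n} (δ ∘ φ)^[k] (δ R))`, we have
`S 0 = δ R` and `S (n+1) = δ (R + φ (S n))`. -/
theorem fixpoint_closed_form {τ : Type*}
    (φ δ : Multiset τ → Multiset τ)
    (hφ0 : φ 0 = 0) (hφadd : ∀ a b : Multiset τ, φ (a + b) = φ a + φ b)
    (hδ0 : δ 0 = 0) (hagg : ∀ a b : Multiset τ, δ (a + b) = δ (δ a + δ b))
    (hcompat : δ ∘ φ ∘ δ = δ ∘ φ)
    (R : Multiset τ)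
    (S : ℕ → Multiset τ)
    (hS : ∀ n, S n = δ (∑ k ∈ Finset.range (n + 1), (δ ∘ φ)^[k] (δ R))) :
    S 0 = δ R ∧ ∀ n, S (n + 1) = δ (R + φ (S n)) := by
  -- δ is idempotent
  have hδδ : ∀ a : Multiset τ, δ (δ a) = δ a := by
    intro a
    have := hagg a 0
    simpa [hδ0] using this.symm
  -- δ absorbs an inner δ on a summand
  have habs : ∀ a b : Multiset τ, δ (a + δ b) = δ (a + b) := by
    intro a b
    rw [hagg a (δ b), hδδ, ← hagg]
  -- δ absorbs inner δ's on each term of a sum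
  have hsum : ∀ (s : Finset ℕ) (x : Multiset τ) (a : ℕ → Multiset τ),
      δ (x + ∑ k ∈ s, δ (a k)) = δ (x + ∑ k ∈ s, a k) := by
    intro s
    induction s using Finset.induction with
    | empty => simp
    | @insert j t hj ih =>
      intro x a
      rw [Finset.sum_insert hj, Finset.sum_insert hj]
      calc δ (x + (δ (a j) + ∑ k ∈ t, δ (a k)))
          = δ ((x + δ (a j)) + ∑ k ∈ t, δ (a k)) := by congr 1; abel
        _ = δ ((x + δ (a j)) + ∑ k ∈ t, a k) := ih _ _
        _ = δ ((x + ∑ k ∈ t, a k) + δ (a j)) := by congr 1; abel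
        _ = δ ((x + ∑ k ∈ t, a k) + a j) := habs _ _
        _ = δ (x + (a j + ∑ k ∈ t, a k)) := by congr 1; abel
  -- φ as an additive hom, for map_sum
  let φ' : Multiset τ →+ Multiset τ := ⟨⟨φ, hφ0⟩, hφadd⟩
  have hφsum : ∀ (s : Finset ℕ) (a : ℕ → Multiset τ),
      φ (∑ k ∈ s, a k) = ∑ k ∈ s, φ (a k) := fun s a => map_sum φ' a s
  have hcompat' : ∀ a, δ (φ (δ a)) = δ (φ a) := fun a => congrFun hcompat a
  constructor
  · simpa [hδδ] using hS 0
  · intro n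
    rw [hS, hS]
    have hlhs : ∑ k ∈ Finset.range (n + 1 + 1), (δ ∘ φ)^[k] (δ R)
        = (∑ k ∈ Finset.range (n + 1), δ (φ ((δ ∘ φ)^[k] (δ R)))) + δ R := by
      rw [Finset.sum_range_succ']
      congr 1
      apply Finset.sum_congr rfl
      intro k _
      rw [Function.iterate_succ']
      rfl
    rw [hlhs, add_comm]
    rw [hsum]
    rw [← hφsum]
    set T := ∑ k ∈ Finset.range (n + 1), (δ ∘ φ)^[k] (δ R) with hT
    conv_rhs => rw [hagg, hcompat' T]
    rw [habs]
end

section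
/- The fixpoint sequence is a homomorphism in its initial argument: let φ be a bag homomorphism and δ an aggregation function compatible with φ, and for a multiset R define S_0(R) = δ(R) and S_{n+1}(R) = δ(R + φ(S_n(R))). Then for all multisets R₁, R₂ and every n, S_n(R₁ + R₂) = δ(S_n(R₁) + S_n(R₂)). -/
/-- The fixpoint sequence `S 0 R = δ R`, `S (n+1) R = δ (R + φ (S n R))`. -/
def fixSeq {τ : Type*} (δ φ : Multiset τ → Multiset τ) (R : Multiset τ) :
    ℕ → Multiset τ
  | 0 => δ R
  | n + 1 => δ (R + φ (fixSeq δ φ R n))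

/-- The fixpoint sequence is a homomorphism in its initial argument. -/
theorem fixSeq_hom {τ : Type*}
    (φ δ : Multiset τ → Multiset τ)
    (hφ0 : φ 0 = 0) (hφadd : ∀ a b : Multiset τ, φ (a + b) = φ a + φ b)
    (hδ0 : δ 0 = 0) (hagg : ∀ a b : Multiset τ, δ (a + b) = δ (δ a + δ b))
    (hcompat : δ ∘ φ ∘ δ = δ ∘ φ)
    (R₁ R₂ : Multiset τ) :
    ∀ n, fixSeq δ φ (R₁ + R₂) n = δ (fixSeq δ φ R₁ n + fixSeq δ φ R₂ n) := by
  have hidem : ∀ a : Multiset τ, δ (δ a) = δ a := by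
    intro a
    have := hagg a 0
    simpa [hδ0] using this.symm
  have habsL : ∀ a b : Multiset τ, δ (δ a + b) = δ (a + b) := by
    intro a b
    rw [hagg (δ a) b, hidem, ← hagg]
  have habsR : ∀ a b : Multiset τ, δ (a + δ b) = δ (a + b) := by
    intro a b
    rw [hagg a (δ b), hidem, ← hagg]
  have hc : ∀ a : Multiset τ, δ (φ (δ a)) = δ (φ a) := by
    intro a
    exact congrFun hcompat a
  have hφδ : ∀ a b : Multiset τ, δ (a + φ (δ b)) = δ (a + φ b) := by
    intro a b
    rw [hagg a (φ (δ b)), hc, ← hagg]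
  intro n
  induction n with
  | zero => exact hagg R₁ R₂
  | succ n ih =>
    show δ (R₁ + R₂ + φ (fixSeq δ φ (R₁ + R₂) n)) = _
    rw [ih, hφδ, hφadd]
    have : R₁ + R₂ + (φ (fixSeq δ φ R₁ n) + φ (fixSeq δ φ R₂ n))
        = (R₁ + φ (fixSeq δ φ R₁ n)) + (R₂ + φ (fixSeq δ φ R₂ n)) := by
      abel
    rw [this, hagg]
    rfl
end

section
/- The fixpoint operation is a monoid homomorphism: let φ be a bag homomorphism, δ an aggregation function compatible with φ, and for a multiset R define S_0(R) = δ(R) and S_{n+1}(R) = δ(R + φ(S_n(R))). Suppose the sequence for R₁ becomes stationary at N₁ (S_{N₁+1}(R₁) = S_{N₁}(R₁)) and the sequence for R₂ becomes stationary at N₂. Then the sequence for R₁ + R₂ becomes stationary at N = max(N₁, N₂), and S_N(R₁ + R₂) = δ(S_{N₁}(R₁) + S_{N₂}(R₂)). Moreover the fixpoint of the empty bag is the empty bag: S_n(0) = 0 for all n. -/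
/-- The fixpoint operation is a monoid homomorphism: if the sequences for `R₁`
and `R₂` become stationary at `N₁` and `N₂`, then the sequence for `R₁ + R₂`
becomes stationary at `N = max N₁ N₂` with value `δ (S N₁ R₁ + S N₂ R₂)`;
moreover the fixpoint of the empty bag is the empty bag. -/
theorem fixpoint_monoid_hom {τ : Type*}
    (φ δ : Multiset τ → Multiset τ)
    (hφ0 : φ 0 = 0) (hφadd : ∀ a b : Multiset τ, φ (a + b) = φ a + φ b)
    (hδ0 : δ 0 = 0) (hagg : ∀ a b : Multiset τ, δ (a + b) = δ (δ a + δ b))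
    (hcompat : δ ∘ φ ∘ δ = δ ∘ φ)
    (R₁ R₂ : Multiset τ) (N₁ N₂ : ℕ)
    (h₁ : fixSeq δ φ R₁ (N₁ + 1) = fixSeq δ φ R₁ N₁)
    (h₂ : fixSeq δ φ R₂ (N₂ + 1) = fixSeq δ φ R₂ N₂) :
    (fixSeq δ φ (R₁ + R₂) (max N₁ N₂ + 1) = fixSeq δ φ (R₁ + R₂) (max N₁ N₂)) ∧
    (fixSeq δ φ (R₁ + R₂) (max N₁ N₂) = δ (fixSeq δ φ R₁ N₁ + fixSeq δ φ R₂ N₂)) ∧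
    (∀ n, fixSeq δ φ 0 n = 0) := by
  -- δ is idempotent
  have hδδ : ∀ a : Multiset τ, δ (δ a) = δ a := by
    intro a
    have := hagg a 0
    simpa [hδ0] using this.symm
  have hcomp : ∀ a : Multiset τ, δ (φ (δ a)) = δ (φ a) := fun a =>
    congrFun hcompat a
  -- absorption: δ (A + φ (δ X)) = δ (A + φ X)
  have habs : ∀ A X : Multiset τ, δ (A + φ (δ X)) = δ (A + φ X) := by
    intro A X
    rw [hagg A (φ (δ X)), hcomp, ← hagg A (φ X)]
  -- key: pointwise homomorphism of the sequence
  have key : ∀ n, fixSeq δ φ (R₁ + R₂) n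
      = δ (fixSeq δ φ R₁ n + fixSeq δ φ R₂ n) := by
    intro n
    induction n with
    | zero => simpa [fixSeq] using hagg R₁ R₂
    | succ n ih =>
        calc fixSeq δ φ (R₁ + R₂) (n + 1)
            = δ (R₁ + R₂ + φ (δ (fixSeq δ φ R₁ n + fixSeq δ φ R₂ n))) := by
              rw [fixSeq, ih]
          _ = δ (R₁ + R₂ + φ (fixSeq δ φ R₁ n + fixSeq δ φ R₂ n)) :=
              habs _ _
          _ = δ ((R₁ + φ (fixSeq δ φ R₁ n)) + (R₂ + φ (fixSeq δ φ R₂ n))) := by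
              rw [hφadd]; congr 1; abel
          _ = δ (fixSeq δ φ R₁ (n + 1) + fixSeq δ φ R₂ (n + 1)) := by
              rw [hagg]; rfl
  -- stabilization
  have stab : ∀ (R : Multiset τ) (N : ℕ),
      fixSeq δ φ R (N + 1) = fixSeq δ φ R N →
      ∀ n, N ≤ n → fixSeq δ φ R n = fixSeq δ φ R N := by
    intro R N hN n
    induction n with
    | zero => intro hn; obtain rfl : N = 0 := Nat.le_zero.mp hn; rfl
    | succ n ih =>
        intro hn
        rcases Nat.lt_or_ge N (n + 1) with h | h
        · have hle : N ≤ n := by omega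
          have := ih hle
          calc fixSeq δ φ R (n + 1) = δ (R + φ (fixSeq δ φ R n)) := rfl
            _ = δ (R + φ (fixSeq δ φ R N)) := by rw [this]
            _ = fixSeq δ φ R (N + 1) := rfl
            _ = fixSeq δ φ R N := hN
        · have : N = n + 1 := by omega
          rw [this]
  have hN₁ := stab R₁ N₁ h₁
  have hN₂ := stab R₂ N₂ h₂
  have e₁ : fixSeq δ φ R₁ (max N₁ N₂) = fixSeq δ φ R₁ N₁ :=
    hN₁ _ (Nat.le_max_left _ _)
  have e₂ : fixSeq δ φ R₂ (max N₁ N₂) = fixSeq δ φ R₂ N₂ :=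
    hN₂ _ (Nat.le_max_right _ _)
  have e₁' : fixSeq δ φ R₁ (max N₁ N₂ + 1) = fixSeq δ φ R₁ N₁ :=
    hN₁ _ (by omega)
  have e₂' : fixSeq δ φ R₂ (max N₁ N₂ + 1) = fixSeq δ φ R₂ N₂ :=
    hN₂ _ (by omega)
  refine ⟨?_, ?_, ?_⟩
  · rw [key, key, e₁, e₂, e₁', e₂']
  · rw [key, e₁, e₂]
  · intro n
    induction n with
    | zero => simpa [fixSeq] using hδ0
    | succ n ih => simp [fixSeq, ih, hφ0, hδ0]
end

section
/- A join is unchanged by semijoin-filtering its second argument (rule PJ, step 1): for multisets A : Multiset (κ × α) and B : Multiset (κ × β), define join(A, B) := A.bind (fun (k, v) => (B.filter (fun q => q.1 = k)).map (fun q => (k, (v, q.2)))). Then join(A, B) = join(A, Π_A(B)), where Π_A(B) := B.filter (fun (k, w) => ∃ v, (k, v) ∈ A). -/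
/-- Join-by-key of two bags of key-value pairs. -/
def bagJoin {κ α β : Type*} [DecidableEq κ]
    (A : Multiset (κ × α)) (B : Multiset (κ × β)) : Multiset (κ × (α × β)) :=
  A.bind fun p => (B.filter fun q => q.1 = p.1).map fun q => (p.1, (p.2, q.2))

/-- A join is unchanged by semijoin-filtering its second argument
(rule PJ, step 1). -/
theorem join_semijoin_filter {κ α β : Type*} [DecidableEq κ]
    (A : Multiset (κ × α)) (B : Multiset (κ × β))
    [DecidablePred fun q : κ × β => ∃ v, (q.1, v) ∈ A] :
    bagJoin A B = bagJoin A (B.filter fun q => ∃ v, (q.1, v) ∈ A) := by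
  unfold bagJoin
  refine Multiset.bind_congr (fun p hp => ?_)
  congr 1
  rw [Multiset.filter_filter]
  apply Multiset.filter_congr
  intro q _
  constructor
  · intro h; exact ⟨h, by rw [h]; exact ⟨p.2, hp⟩⟩
  · exact fun h => h.1
end
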